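/- For every tree T with at least 2 vertices, Δ(T) ≤ cfc(T) ≤ α(T). In particular, if Δ(T) = α(T) then cfc(T) = Δ(T). -/

import Mathlib

open SimpleGraph

/-- An edge coloring `c` makes `G` conflict-free connected: every two distinct
vertices are joined by a path containing a color used on exactly one of its edges. -/
def IsCFConnColoring {V : Type*} (G : SimpleGraph V) (c : Sym2 V → ℕ) : Prop :=
  ∀ u v : V, u ≠ v → ∃ p : G.Walk u v, p.IsPath ∧
    ∃ col : ℕ, (p.edges.filter (fun e => c e = col)).length = 1

/-- The conflict-free connection number: the minimum number of colors in a
conflict-free connection coloring. -/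
noncomputable def cfcNum {V : Type*} (G : SimpleGraph V) : ℕ :=
  sInf {k | ∃ c : Sym2 V → ℕ, (∀ e, c e < k) ∧ IsCFConnColoring G c}

/-- The independence number: the maximum size of a set of pairwise non-adjacent vertices. -/
noncomputable def indepNum {V : Type*} [Fintype V] (G : SimpleGraph V) : ℕ :=
  sSup {n | ∃ s : Finset V, (↑s : Set V).Pairwise (fun a b => ¬ G.Adj a b) ∧ s.card = n}

noncomputable local instance {V : Type*} (G : SimpleGraph V) : DecidableRel G.Adj :=
  fun _ _ => Classical.dec _

/-!
The lower bound holds because in a tree the only path between two neighbours `y, z` of a vertex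
`x` is `y x z`, so a conflict-free colouring gives the edges at `x` pairwise distinct colours.

For the upper bound we colour every subtree `A` with fewer colours than the size of some
independent set of `A`, by induction on `A`. If `A` is a star, colour its edges injectively; its
leaves are independent. Otherwise some edge `uv` of `A` has a further neighbour `w₁` of `u` and
`w₂` of `v`. Deleting `uv` splits `A` into two subtrees, coloured recursively, and `uv` gets one
new colour, which then occurs exactly once on every path crossing `uv`. The new colour is paid
for by `w₂` (resp. `w₁`), which extends an independent set of the side of `u` (resp. `v`).
-/

open Finset

lemma Finset.exists_injOn_lt_card {α : Type*} (s : Finset α) (hs : s.Nonempty) :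
    ∃ f : α → ℕ, Set.InjOn f s ∧ ∀ a, f a < #s := by
  classical
  refine ⟨fun a => if h : a ∈ s then s.equivFin ⟨a, h⟩ else 0, fun a ha b hb hab => ?_, fun a => ?_⟩
  · simp only [mem_coe] at ha hb
    simpa [ha, hb, Fin.val_inj] using hab
  · dsimp only
    split_ifs
    · exact Fin.is_lt _
    · exact hs.card_pos

namespace SimpleGraph

variable {V : Type*} {G : SimpleGraph V} {A S B : Finset V} {c c' c₁ c₂ : Sym2 V → ℕ}
  {k : ℕ} {u v w x y z : V}

lemma IsAcyclic.mem_edges_of_adj (hG : G.IsAcyclic) (huv : G.Adj u v) (p : G.Walk u v) :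
    s(u, v) ∈ p.edges :=
  isBridge_iff_forall_walk_mem_edges.1 (isAcyclic_iff_forall_adj_isBridge.1 hG huv) p

lemma Walk.mem_sym2_of_mem_edges {p : G.Walk x y} (hp : ∀ z ∈ p.support, z ∈ A) {e : Sym2 V}
    (he : e ∈ p.edges) : e ∈ A.sym2 := by
  induction e with
  | _ a b =>
    exact mk_mem_sym2_iff.2
      ⟨hp _ (p.fst_mem_support_of_mem_edges he), hp _ (p.snd_mem_support_of_mem_edges he)⟩

def ConnectedOn (G : SimpleGraph V) (A : Finset V) : Prop :=
  ∀ x ∈ A, ∀ y ∈ A, ∃ p : G.Walk x y, ∀ z ∈ p.support, z ∈ A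

lemma ConnectedOn.exists_isPath (hA : G.ConnectedOn A) (hx : x ∈ A) (hy : y ∈ A) :
    ∃ p : G.Walk x y, p.IsPath ∧ ∀ z ∈ p.support, z ∈ A := by
  classical
  obtain ⟨p, hp⟩ := hA x hx y hy
  exact ⟨p.toPath, p.toPath.2, fun z hz => hp z (p.support_toPath_subset_support hz)⟩

lemma Connected.connectedOn_univ [Fintype V] (hG : G.Connected) : G.ConnectedOn univ :=
  fun x _ y _ => let ⟨p⟩ := hG.preconnected x y; ⟨p, fun z _ => mem_univ z⟩

def CFJoinedOn (G : SimpleGraph V) (A : Finset V) (c : Sym2 V → ℕ) (x y : V) : Prop :=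
  ∃ p : G.Walk x y, p.IsPath ∧ (∀ z ∈ p.support, z ∈ A) ∧
    ∃ col : ℕ, (p.edges.filter (fun e => c e = col)).length = 1

def IsCFConnColoringOn (G : SimpleGraph V) (A : Finset V) (c : Sym2 V → ℕ) : Prop :=
  ∀ x ∈ A, ∀ y ∈ A, x ≠ y → G.CFJoinedOn A c x y

lemma CFJoinedOn.symm (h : G.CFJoinedOn A c x y) : G.CFJoinedOn A c y x := by
  obtain ⟨p, hp, hpA, col, hcol⟩ := h
  exact ⟨p.reverse, hp.reverse, by simpa using hpA, col, by simpa [List.filter_reverse] using hcol⟩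

lemma CFJoinedOn.mono (h : G.CFJoinedOn A c x y) (hAB : A ⊆ B) : G.CFJoinedOn B c x y := by
  obtain ⟨p, hp, hpA, hcol⟩ := h
  exact ⟨p, hp, fun z hz => hAB (hpA z hz), hcol⟩

lemma IsCFConnColoringOn.congr (h : G.IsCFConnColoringOn A c) (hcc : ∀ e ∈ A.sym2, c e = c' e) :
    G.IsCFConnColoringOn A c' := by
  intro x hx y hy hxy
  obtain ⟨p, hp, hpA, col, hcol⟩ := h x hx y hy hxy
  refine ⟨p, hp, hpA, col, ?_⟩
  rwa [List.filter_congr fun e he => by rw [hcc e (Walk.mem_sym2_of_mem_edges hpA he)]] at hcol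

lemma IsCFConnColoringOn.isCFConnColoring [Fintype V] (h : G.IsCFConnColoringOn univ c) :
    IsCFConnColoring G c := fun x y hxy =>
  let ⟨p, hp, _, hcol⟩ := h x (mem_univ x) y (mem_univ y) hxy
  ⟨p, hp, hcol⟩

lemma IsCFConnColoring.ne_of_adj_of_adj (hG : G.IsAcyclic) (hc : IsCFConnColoring G c)
    (hy : G.Adj x y) (hz : G.Adj x z) (hyz : y ≠ z) : c s(x, y) ≠ c s(x, z) := by
  intro hcol
  obtain ⟨p, hp, col, hlen⟩ := hc y z hyz
  have hq : (Walk.cons hy.symm (Walk.cons hz Walk.nil)).IsPath := by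
    simp [Walk.cons_isPath_iff, hyz, hy.ne.symm, hz.ne]
  obtain rfl : p = Walk.cons hy.symm (Walk.cons hz Walk.nil) :=
    congrArg Subtype.val ((hG.subsingleton_path _ _).elim ⟨p, hp⟩ ⟨_, hq⟩)
  by_cases h : c s(x, y) = col <;> simp_all [List.filter_cons, Sym2.eq_swap]

lemma IsCFConnColoring.maxDegree_le [Fintype V] [DecidableRel G.Adj] (hG : G.IsAcyclic)
    (hc : IsCFConnColoring G c) (hk : ∀ e, c e < k) : G.maxDegree ≤ k := by
  refine maxDegree_le_of_forall_degree_le _ _ fun x => ?_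
  rw [← card_neighborFinset_eq_degree]
  calc #(G.neighborFinset x) ≤ #(range k) := by
        refine card_le_card_of_injOn (fun y => c s(x, y)) (fun y _ => mem_range.2 (hk _)) ?_
        intro y hy z hz hcol
        by_contra hyz
        exact hc.ne_of_adj_of_adj hG (by simpa using hy) (by simpa using hz) hyz hcol
    _ = k := card_range k

lemma exists_adj_adj_of_not_adj (hA : G.ConnectedOn A) (hz : z ∈ A) (hx : x ∈ A) (hxz : x ≠ z)
    (hzx : ¬G.Adj z x) : ∃ w ∈ A, G.Adj z w ∧ ∃ y ∈ A, y ≠ z ∧ G.Adj w y := by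
  obtain ⟨p, hp, hpA⟩ := hA.exists_isPath hz hx
  match p, hp, hpA with
  | .nil, _, _ => exact absurd rfl hxz
  | .cons h .nil, _, _ => exact absurd h hzx
  | .cons h (.cons h' _), hp, hpA =>
    refine ⟨_, hpA _ (by simp), h, _, hpA _ (by simp), ?_, h'⟩
    rintro rfl
    exact ((Walk.cons_isPath_iff _ _).1 hp).2 (by simp)

lemma exists_center_or_exists_adj_of_connectedOn (hA : G.ConnectedOn A) (hne : A.Nonempty) :
    (∃ z ∈ A, ∀ x ∈ A, x ≠ z → G.Adj z x) ∨
      ∃ u ∈ A, ∃ v ∈ A, G.Adj u v ∧ (∃ w ∈ A, w ≠ v ∧ G.Adj u w) ∧ ∃ w ∈ A, w ≠ u ∧ G.Adj v w := by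
  refine or_iff_not_imp_left.2 fun hstar => ?_
  push Not at hstar
  obtain ⟨a, ha⟩ := hne
  obtain ⟨x, hx, hxa, hax⟩ := hstar a ha
  obtain ⟨u, hu, hau, y, hy, hya, huy⟩ := exists_adj_adj_of_not_adj hA ha hx hxa hax
  obtain ⟨x', hx', hx'u, hux'⟩ := hstar u hu
  obtain ⟨v, hv, huv, w, hw, hwu, hvw⟩ := exists_adj_adj_of_not_adj hA hu hx' hx'u hux'
  refine ⟨u, hu, v, hv, huv, ?_, w, hw, hwu, hvw⟩
  by_cases hav : a = v
  · exact ⟨y, hy, hav ▸ hya, huy⟩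
  · exact ⟨a, ha, hav, hau.symm⟩

lemma isIndepSet_erase_of_forall_adj [DecidableEq V] (hG : G.IsAcyclic)
    (hstar : ∀ x ∈ A, x ≠ z → G.Adj z x) :
    G.IsIndepSet (A.erase z) := by
  intro x hx y hy hxy hadj
  simp only [mem_coe, mem_erase] at hx hy
  have := hG.mem_edges_of_adj hadj
    (Walk.cons (hstar x hx.2 hx.1).symm (Walk.cons (hstar y hy.2 hy.1) Walk.nil))
  simp [hx.1, hy.1] at this

lemma isCFConnColoringOn_of_forall_adj (hz : z ∈ A) (hstar : ∀ x ∈ A, x ≠ z → G.Adj z x)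
    (hc : ∀ x ∈ A, ∀ y ∈ A, x ≠ z → y ≠ z → c s(z, x) = c s(z, y) → x = y) :
    G.IsCFConnColoringOn A c := by
  have hcenter : ∀ y ∈ A, y ≠ z → G.CFJoinedOn A c z y := fun y hy hyz =>
    ⟨Walk.cons (hstar y hy hyz) Walk.nil, by simp [Ne.symm hyz], by simp [hz, hy], c s(z, y),
      by simp⟩
  intro x hx y hy hxy
  by_cases hxz : x = z
  · exact hxz ▸ hcenter y hy (hxz ▸ hxy).symm
  by_cases hyz : y = z
  · exact (hyz ▸ hcenter x hx (hyz ▸ hxy)).symm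
  refine ⟨Walk.cons (hstar x hx hxz).symm (Walk.cons (hstar y hy hyz) Walk.nil), ?_, ?_,
    c s(z, x), ?_⟩
  · simp [Walk.cons_isPath_iff, hxz, hxy, Ne.symm hyz]
  · simp [hx, hy, hz]
  · have hne : c s(z, y) ≠ c s(z, x) := fun h => hxy (hc y hy x hx hyz hxz h).symm
    simp [Sym2.eq_swap, hne]

lemma exists_isCFConnColoringOn_of_forall_adj (hG : G.IsAcyclic) (hz : z ∈ A)
    (hstar : ∀ x ∈ A, x ≠ z → G.Adj z x) :
    ∃ c : Sym2 V → ℕ, ∃ s ⊆ A, G.IsIndepSet s ∧ (∀ e, c e < #s) ∧ G.IsCFConnColoringOn A c := by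
  classical
  rcases (A.erase z).eq_empty_or_nonempty with hA | hA
  · have hAz : A = {z} := ((erase_eq_empty_iff _ _).1 hA).resolve_left (ne_empty_of_mem hz)
    refine ⟨0, {z}, hAz.ge, by simp, by simp, fun x hx y hy hxy => ?_⟩
    simp only [hAz, mem_singleton] at hx hy
    exact absurd (hx.trans hy.symm) hxy
  obtain ⟨f, hf, hfs⟩ := Finset.exists_injOn_lt_card ((A.erase z).image (s(z, ·))) (hA.image _)
  refine ⟨f, A.erase z, erase_subset _ _, isIndepSet_erase_of_forall_adj hG hstar,
    fun e => (hfs e).trans_le card_image_le, isCFConnColoringOn_of_forall_adj hz hstar ?_⟩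
  intro x hx y hy hxz hyz h
  exact Sym2.congr_right.1 (hf (mem_image_of_mem _ (mem_erase.2 ⟨hxz, hx⟩))
    (mem_image_of_mem _ (mem_erase.2 ⟨hyz, hy⟩)) h)

lemma cfJoinedOn_union_of_adj [DecidableEq V] (hSB : Disjoint S B) (hu : u ∈ S) (hv : v ∈ B)
    (huv : G.Adj u v) (hS : G.ConnectedOn S) (hB : G.ConnectedOn B)
    (hcS : ∀ e ∈ S.sym2, c e ≠ c s(u, v)) (hcB : ∀ e ∈ B.sym2, c e ≠ c s(u, v))
    (hx : x ∈ S) (hy : y ∈ B) : G.CFJoinedOn (S ∪ B) c x y := by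
  obtain ⟨q₁, hq₁, hq₁S⟩ := hS.exists_isPath hx hu
  obtain ⟨q₂, hq₂, hq₂B⟩ := hB.exists_isPath hv hy
  refine ⟨q₁.append (Walk.cons huv q₂), ?_, ?_, c s(u, v), ?_⟩
  · rw [Walk.isPath_def, Walk.support_append, Walk.support_cons, List.tail_cons,
      List.nodup_append]
    exact ⟨hq₁.support_nodup, hq₂.support_nodup,
      fun a ha b hb hab => Finset.disjoint_left.1 hSB (hq₁S a ha) (hab ▸ hq₂B b hb)⟩
  · intro z hz
    rw [Walk.mem_support_append_iff, Walk.support_cons, List.mem_cons] at hz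
    rcases hz with hz | rfl | hz
    · exact mem_union_left _ (hq₁S z hz)
    · exact mem_union_left _ hu
    · exact mem_union_right _ (hq₂B z hz)
  · have h₁ : q₁.edges.filter (fun e => c e = c s(u, v)) = [] := List.filter_eq_nil_iff.2
      fun e he => by simpa using hcS e (Walk.mem_sym2_of_mem_edges hq₁S he)
    have h₂ : q₂.edges.filter (fun e => c e = c s(u, v)) = [] := List.filter_eq_nil_iff.2
      fun e he => by simpa using hcB e (Walk.mem_sym2_of_mem_edges hq₂B he)
    simp [Walk.edges_append, List.filter_append, h₁, h₂]

lemma IsCFConnColoringOn.exists_union [DecidableEq V] (hSB : Disjoint S B) (hu : u ∈ S)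
    (hv : v ∈ B) (huv : G.Adj u v) (hS : G.ConnectedOn S) (hB : G.ConnectedOn B)
    (hc₁ : G.IsCFConnColoringOn S c₁) (hc₂ : G.IsCFConnColoringOn B c₂)
    (hk₁ : ∀ e, c₁ e < k) (hk₂ : ∀ e, c₂ e < k) :
    ∃ c : Sym2 V → ℕ, (∀ e, c e ≤ k) ∧ G.IsCFConnColoringOn (S ∪ B) c := by
  set c : Sym2 V → ℕ := fun e => if e = s(u, v) then k else if e ∈ S.sym2 then c₁ e else c₂ e
  have hk : c s(u, v) = k := if_pos rfl
  have hcS : ∀ e ∈ S.sym2, c₁ e = c e := fun e he => by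
    have hne : e ≠ s(u, v) := by
      rintro rfl
      exact Finset.disjoint_left.1 hSB (mk_mem_sym2_iff.1 he).2 hv
    simp only [c, if_neg hne, if_pos he]
  have hcB : ∀ e ∈ B.sym2, c₂ e = c e := fun e he => by
    have hne : e ≠ s(u, v) := by
      rintro rfl
      exact Finset.disjoint_left.1 hSB hu (mk_mem_sym2_iff.1 he).1
    have hnS : e ∉ S.sym2 := fun he' => Finset.disjoint_left.1 hSB
      (mem_sym2_iff.1 he' _ e.out_fst_mem) (mem_sym2_iff.1 he _ e.out_fst_mem)
    simp only [c, if_neg hne, if_neg hnS]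
  have cross : ∀ x ∈ S, ∀ y ∈ B, G.CFJoinedOn (S ∪ B) c x y :=
    fun x hx y hy => cfJoinedOn_union_of_adj hSB hu hv huv hS hB
      (fun e he => hk ▸ hcS e he ▸ (hk₁ e).ne) (fun e he => hk ▸ hcB e he ▸ (hk₂ e).ne) hx hy
  refine ⟨c, fun e => ?_, ?_⟩
  · simp only [c]
    split_ifs
    exacts [le_rfl, (hk₁ e).le, (hk₂ e).le]
  intro x hx y hy hxy
  rcases mem_union.1 hx with hx | hx <;> rcases mem_union.1 hy with hy | hy
  · exact ((hc₁.congr hcS) x hx y hy hxy).mono subset_union_left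
  · exact cross x hx y hy
  · exact (cross y hy x hx).symm
  · exact ((hc₂.congr hcB) x hx y hy hxy).mono subset_union_right

/-- When `A` is a subtree of a forest containing the edge `uv`, this is the component of `u`
in `A` once `uv` is deleted. -/
noncomputable def side (G : SimpleGraph V) (A : Finset V) (u v : V) : Finset V := by
  classical
  exact {x ∈ A | ∃ p : G.Walk u x, (∀ z ∈ p.support, z ∈ A) ∧ s(u, v) ∉ p.edges}

lemma mem_side : x ∈ G.side A u v ↔
    x ∈ A ∧ ∃ p : G.Walk u x, (∀ z ∈ p.support, z ∈ A) ∧ s(u, v) ∉ p.edges := by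
  simp [side]

lemma side_subset : G.side A u v ⊆ A := fun _ hx => (mem_side.1 hx).1

lemma self_mem_side (hu : u ∈ A) : u ∈ G.side A u v :=
  mem_side.2 ⟨hu, Walk.nil, by simpa using hu, by simp⟩

lemma mem_side_of_mem_support {p : G.Walk u x} (hpA : ∀ z ∈ p.support, z ∈ A)
    (hpe : s(u, v) ∉ p.edges) (hz : z ∈ p.support) : z ∈ G.side A u v := by
  classical
  exact mem_side.2 ⟨hpA z hz, p.takeUntil z hz,
    fun w hw => hpA w (p.support_takeUntil_subset_support hz hw),
    fun h => hpe (p.edges_takeUntil_subset_edges hz h)⟩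

lemma mem_side_of_adj (hx : x ∈ G.side A u v) (hy : y ∈ A) (hxy : G.Adj x y)
    (hne : s(x, y) ≠ s(u, v)) : y ∈ G.side A u v := by
  obtain ⟨-, p, hpA, hpe⟩ := mem_side.1 hx
  refine mem_side.2 ⟨hy, p.concat hxy, fun z hz => ?_, ?_⟩
  · simp only [Walk.support_concat, List.mem_append, List.mem_singleton] at hz
    rcases hz with hz | rfl
    exacts [hpA z hz, hy]
  · simp [Walk.edges_concat, hpe, Ne.symm hne]

lemma connectedOn_side : G.ConnectedOn (G.side A u v) := by
  intro x hx y hy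
  obtain ⟨-, p, hpA, hpe⟩ := mem_side.1 hx
  obtain ⟨-, q, hqA, hqe⟩ := mem_side.1 hy
  refine ⟨p.reverse.append q, fun z hz => ?_⟩
  rcases (Walk.mem_support_append_iff _ _).1 hz with hz | hz
  · exact mem_side_of_mem_support hpA hpe (by simpa using hz)
  · exact mem_side_of_mem_support hqA hqe hz

lemma disjoint_side (hG : G.IsAcyclic) (huv : G.Adj u v) :
    Disjoint (G.side A u v) (G.side A v u) := by
  refine Finset.disjoint_left.2 fun x hxu hxv => ?_
  obtain ⟨-, p, -, hp⟩ := mem_side.1 hxu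
  obtain ⟨-, q, -, hq⟩ := mem_side.1 hxv
  rw [Sym2.eq_swap] at hq
  simpa [hp, hq] using hG.mem_edges_of_adj huv (p.append q.reverse)

lemma mem_side_union_side_of_walk [DecidableEq V] (hu : u ∈ A) (hv : v ∈ A) (q : G.Walk w x)
    (hw : w ∈ G.side A u v ∪ G.side A v u) (hqA : ∀ z ∈ q.support, z ∈ A) :
    x ∈ G.side A u v ∪ G.side A v u := by
  induction q with
  | nil => exact hw
  | @cons w w' _ hww' q ih =>
    refine ih ?_ fun z hz => hqA z (by simp [hz])
    have hw' : w' ∈ A := hqA w' (by simp)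
    by_cases he : s(w, w') = s(u, v)
    · rcases Sym2.eq_iff.1 he with ⟨-, rfl⟩ | ⟨-, rfl⟩
      exacts [mem_union_right _ (self_mem_side hv), mem_union_left _ (self_mem_side hu)]
    · rcases mem_union.1 hw with hw | hw
      · exact mem_union_left _ (mem_side_of_adj hw hw' hww' he)
      · exact mem_union_right _ (mem_side_of_adj hw hw' hww' (by rwa [Sym2.eq_swap (a := v)]))

lemma side_union_side [DecidableEq V] (hA : G.ConnectedOn A) (hu : u ∈ A) (hv : v ∈ A) :
    G.side A u v ∪ G.side A v u = A := by
  refine Subset.antisymm (union_subset side_subset side_subset) fun x hx => ?_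
  obtain ⟨p, hpA⟩ := hA u hu x hx
  exact mem_side_union_side_of_walk hu hv p (mem_union_left _ (self_mem_side hu)) hpA

lemma eq_and_eq_of_adj_of_mem_side (hG : G.IsAcyclic) (huv : G.Adj u v)
    (hx : x ∈ G.side A u v) (hy : y ∈ G.side A v u) (hxy : G.Adj x y) : x = u ∧ y = v := by
  have hdisj := Finset.disjoint_left.1 (disjoint_side (A := A) hG huv)
  by_cases he : s(x, y) = s(u, v)
  · rcases Sym2.eq_iff.1 he with h | ⟨rfl, -⟩
    exacts [h, (hdisj hx (self_mem_side (side_subset hx))).elim]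
  · exact (hdisj (mem_side_of_adj hx (side_subset hy) hxy he) hy).elim

lemma exists_isIndepSet_card_eq_succ (hG : G.IsAcyclic) (huv : G.Adj u v) {s : Finset V}
    (hs : s ⊆ G.side A u v) (hind : G.IsIndepSet s) (hw : w ∈ G.side A v u) (hwv : w ≠ v) :
    ∃ t ⊆ A, G.IsIndepSet t ∧ #t = #s + 1 := by
  classical
  have hws : w ∉ s := fun h => Finset.disjoint_left.1 (disjoint_side hG huv) (hs h) hw
  refine ⟨insert w s, insert_subset (side_subset hw) (hs.trans side_subset), ?_,
    card_insert_of_notMem hws⟩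
  have hwb : ∀ b ∈ s, ¬G.Adj b w := fun b hb hadj =>
    hwv (eq_and_eq_of_adj_of_mem_side hG huv (hs hb) hw hadj).2
  rw [IsIndepSet, coe_insert, Set.pairwise_insert]
  exact ⟨hind, fun b hb _ => ⟨fun h => hwb b hb h.symm, hwb b hb⟩⟩

theorem exists_isCFConnColoringOn (hG : G.IsAcyclic) (hne : A.Nonempty) (hA : G.ConnectedOn A) :
    ∃ c : Sym2 V → ℕ, ∃ s ⊆ A, G.IsIndepSet s ∧ (∀ e, c e < #s) ∧ G.IsCFConnColoringOn A c := by
  classical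
  induction A using Finset.strongInduction with
  | H A ih =>
    rcases exists_center_or_exists_adj_of_connectedOn hA hne with ⟨z, hz, hstar⟩ |
      ⟨u, hu, v, hv, huv, ⟨w₁, hw₁, hw₁v, huw₁⟩, w₂, hw₂, hw₂u, hvw₂⟩
    · exact exists_isCFConnColoringOn_of_forall_adj hG hz hstar
    have hdisj : Disjoint (G.side A u v) (G.side A v u) := disjoint_side hG huv
    have huS : u ∈ G.side A u v := self_mem_side hu
    have hvB : v ∈ G.side A v u := self_mem_side hv
    have hSA : G.side A u v ⊂ A := (ssubset_iff_of_subset side_subset).2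
      ⟨v, hv, fun h => Finset.disjoint_left.1 hdisj h hvB⟩
    have hBA : G.side A v u ⊂ A := (ssubset_iff_of_subset side_subset).2
      ⟨u, hu, fun h => Finset.disjoint_left.1 hdisj huS h⟩
    obtain ⟨c₁, s₁, hs₁, hind₁, hc₁s, hc₁⟩ := ih _ hSA ⟨u, huS⟩ connectedOn_side
    obtain ⟨c₂, s₂, hs₂, hind₂, hc₂s, hc₂⟩ := ih _ hBA ⟨v, hvB⟩ connectedOn_side
    obtain ⟨c, hck, hc⟩ := hc₁.exists_union hdisj huS hvB huv connectedOn_side connectedOn_side hc₂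
      (fun e => (hc₁s e).trans_le (le_max_left #s₁ #s₂))
      (fun e => (hc₂s e).trans_le (le_max_right _ _))
    rw [side_union_side hA hu hv] at hc
    rcases le_total #s₂ #s₁ with h | h
    · have hw₂B : w₂ ∈ G.side A v u := mem_side_of_adj hvB hw₂ hvw₂ (by simp [hw₂u, huv.ne'])
      obtain ⟨t, htA, ht, htcard⟩ := exists_isIndepSet_card_eq_succ hG huv hs₁ hind₁ hw₂B hvw₂.ne'
      exact ⟨c, t, htA, ht, fun e => by have := hck e; omega, hc⟩
    · have hw₁S : w₁ ∈ G.side A u v := mem_side_of_adj huS hw₁ huw₁ (by simp [hw₁v, huv.ne])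
      obtain ⟨t, htA, ht, htcard⟩ :=
        exists_isIndepSet_card_eq_succ hG huv.symm hs₂ hind₂ hw₁S huw₁.ne'
      exact ⟨c, t, htA, ht, fun e => by have := hck e; omega, hc⟩

end SimpleGraph

lemma indepNum_eq_simpleGraph_indepNum {V : Type*} [Fintype V] (G : SimpleGraph V) :
    _root_.indepNum G = G.indepNum := by
  simp only [_root_.indepNum, SimpleGraph.indepNum, isNIndepSet_iff, IsIndepSet]

theorem stmt4_general {V : Type*} [Fintype V] (T : SimpleGraph V) (hT : T.IsTree) :
    (T.maxDegree ≤ cfcNum T ∧ cfcNum T ≤ _root_.indepNum T) ∧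
    (T.maxDegree = _root_.indepNum T → cfcNum T = T.maxDegree) := by
  have : Nonempty V := hT.connected.nonempty
  obtain ⟨c, s, -, hs, hcs, hc⟩ :=
    exists_isCFConnColoringOn hT.isAcyclic univ_nonempty hT.connected.connectedOn_univ
  have hmem : #s ∈ {k | ∃ c : Sym2 V → ℕ, (∀ e, c e < k) ∧ IsCFConnColoring T c} :=
    ⟨c, hcs, hc.isCFConnColoring⟩
  have hupper : cfcNum T ≤ _root_.indepNum T :=
    (Nat.sInf_le hmem).trans (indepNum_eq_simpleGraph_indepNum T ▸ hs.card_le_indepNum)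
  have hlower : T.maxDegree ≤ cfcNum T :=
    le_csInf ⟨_, hmem⟩ fun k ⟨c, hck, hc⟩ => hc.maxDegree_le hT.isAcyclic hck
  exact ⟨⟨hlower, hupper⟩, fun h => le_antisymm (h ▸ hupper) hlower⟩

theorem stmt4 {V : Type*} [Fintype V] (T : SimpleGraph V) (hT : T.IsTree)
    (hn : 2 ≤ Fintype.card V) :
    (T.maxDegree ≤ cfcNum T ∧ cfcNum T ≤ _root_.indepNum T) ∧
    (T.maxDegree = _root_.indepNum T → cfcNum T = T.maxDegree) :=
  stmt4_general T hT
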